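/- Let C = (C, ⊗, I) be a monoidal category admitting an initial object 0 and a coproduct I + I, both preserved by each functor A ⊗ (−), and suppose 0 and I + I admit right duals. Then the object 0 is terminal, and the unit object I carries a counital comagma structure: there exist morphisms δ : I → I + I and ε : I → 0 such that composing δ with the map I + I → I whose first component is I → 0 → I (via ε followed by the unique map out of 0) and whose second component is the identity yields 1_I, and symmetrically with the two components exchanged. -/

import Mathlib

open CategoryTheory CategoryTheory.Limits CategoryTheory.MonoidalCategory

universe v u

/-- `Y` is a right dual of `X`, witnessed by `η : 𝟙_ C ⟶ Y ⊗ X`, when every morphism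
`f : A ⟶ B ⊗ X` factors as `(g ▷ X) ∘ (A ◁ η)` (modulo unitor and associator) for a
unique `g : A ⊗ Y ⟶ B`. -/
def IsRightDual {C : Type u} [Category.{v} C] [MonoidalCategory C]
    (X Y : C) (η : 𝟙_ C ⟶ Y ⊗ X) : Prop :=
  ∀ (A B : C) (f : A ⟶ B ⊗ X), ∃! g : A ⊗ Y ⟶ B,
    f = (ρ_ A).inv ≫ (A ◁ η) ≫ (α_ A Y X).inv ≫ (g ▷ X)

/-- `Y` is a left dual of `X`, witnessed by `η : 𝟙_ C ⟶ X ⊗ Y`, when every morphism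
`f : A ⟶ X ⊗ B` factors as `(X ◁ g) ∘ (η ▷ A)` (modulo unitor and associator) for a
unique `g : Y ⊗ A ⟶ B`. -/
def IsLeftDual {C : Type u} [Category.{v} C] [MonoidalCategory C]
    (X Y : C) (η : 𝟙_ C ⟶ X ⊗ Y) : Prop :=
  ∀ (A B : C) (f : A ⟶ X ⊗ B), ∃! g : Y ⊗ A ⟶ B,
    f = (λ_ A).inv ≫ (η ▷ A) ≫ (α_ X Y A).hom ≫ (X ◁ g)

/-!
Every map `A ⟶ B ⊗ X` into an object with right dual `(Y, η)` factors through
`(A ⊗ Y) ⊗ X`. For `X = O` that object is initial, so maps `A ⟶ O` are unique: `O` is terminal.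
For `J = 𝟙 + 𝟙` with right dual `(D, η)`, each injection `jᵢ` is `η ≫ (gᵢ ▷ J) ≫ λ` for some
`gᵢ : D ⟶ 𝟙`. As `D ⊗ J ≅ D + D`, the maps `gᵢ ≫ jᵢ` glue to `m : D ⊗ J ⟶ J`, and
`δ := η ≫ m`. After a counit projection `p` killing `jₖ`, the morphism `m` agrees with `gᵢ ▷ J`
(the two components through `O` coincide because `O` is terminal), so `δ ≫ p = jᵢ ≫ p = 𝟙`.
-/

namespace IsRightDual

variable {C : Type u} [Category.{v} C] [MonoidalCategory C] {X Y : C} {η : 𝟙_ C ⟶ Y ⊗ X}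

theorem eq_of_isInitial (h : IsRightDual X Y η) (hX : ∀ A : C, IsInitial (A ⊗ X)) {A B : C}
    (f f' : A ⟶ B ⊗ X) : f = f' := by
  obtain ⟨g, rfl, -⟩ := h A B f
  obtain ⟨g', rfl, -⟩ := h A B f'
  rw [(hX (A ⊗ Y)).hom_ext (g ▷ X) (g' ▷ X)]

def isTerminal (h : IsRightDual X Y η) (hX : ∀ A : C, IsInitial (A ⊗ X)) : IsTerminal X :=
  IsTerminal.ofUniqueHom
    (fun A => (ρ_ A).inv ≫ (A ◁ η) ≫ (α_ A Y X).inv ≫ (hX (A ⊗ Y)).to X)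
    (fun _ _ => (cancel_mono (λ_ X).inv).1 (h.eq_of_isInitial hX _ _))

theorem exists_unit_comp_whiskerRight_comp_leftUnitor (h : IsRightDual X Y η)
    (j : 𝟙_ C ⟶ X) : ∃ g : Y ⟶ 𝟙_ C, η ≫ (g ▷ X) ≫ (λ_ X).hom = j := by
  obtain ⟨g, hg, -⟩ := h (𝟙_ C) (𝟙_ C) (j ≫ (λ_ X).inv)
  refine ⟨(λ_ Y).inv ≫ g, ?_⟩
  rw [← cancel_mono (λ_ X).inv, Category.assoc, Category.assoc, Iso.hom_inv_id,
    Category.comp_id, hg]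
  monoidal

end IsRightDual

section

variable {C : Type u} [Category.{v} C] [MonoidalCategory C] {D J : C} {j₁ j₂ : 𝟙_ C ⟶ J}

theorem whiskerLeft_comp_whiskerRight_comp_leftUnitor_hom (k : 𝟙_ C ⟶ J) (g : D ⟶ 𝟙_ C) :
    (D ◁ k) ≫ (g ▷ J) ≫ (λ_ J).hom = (ρ_ D).hom ≫ g ≫ k := by
  rw [whisker_exchange_assoc, leftUnitor_naturality, unitors_equal,
    rightUnitor_naturality_assoc]

theorem comp_eq_whiskerRight_comp_leftUnitor_comp
    (hDJ : IsColimit (BinaryCofan.mk (D ◁ j₁) (D ◁ j₂))) {g₁ g₂ : D ⟶ 𝟙_ C} {m : D ⊗ J ⟶ J}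
    (hm₁ : D ◁ j₁ ≫ m = (ρ_ D).hom ≫ g₁ ≫ j₁) (hm₂ : D ◁ j₂ ≫ m = (ρ_ D).hom ≫ g₂ ≫ j₂)
    (g : D ⟶ 𝟙_ C) {Z : C} {q : J ⟶ Z}
    (h₁ : g₁ ≫ j₁ ≫ q = g ≫ j₁ ≫ q) (h₂ : g₂ ≫ j₂ ≫ q = g ≫ j₂ ≫ q) :
    m ≫ q = (g ▷ J) ≫ (λ_ J).hom ≫ q := by
  refine BinaryCofan.IsColimit.hom_ext hDJ ?_ ?_
  · show D ◁ j₁ ≫ _ = D ◁ j₁ ≫ _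
    rw [reassoc_of% hm₁, reassoc_of% whiskerLeft_comp_whiskerRight_comp_leftUnitor_hom, h₁]
  · show D ◁ j₂ ≫ _ = D ◁ j₂ ≫ _
    rw [reassoc_of% hm₂, reassoc_of% whiskerLeft_comp_whiskerRight_comp_leftUnitor_hom, h₂]

end

/-- Let `C` be a monoidal category with an initial object `O` and a coproduct
`J = 𝟙_C + 𝟙_C` of the unit with itself, both preserved by each functor `A ⊗ (−)`, and
suppose `O` and `J` admit right duals.  Then `O` is terminal, and the unit object carries
a counital comagma structure: there are `δ : 𝟙_C ⟶ J` and `ε : 𝟙_C ⟶ O` such that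
composing `δ` with the map `J ⟶ 𝟙_C` whose first (resp. second) component is `ε` followed
by the unique map out of `O` and whose other component is the identity yields the
identity. -/
theorem isTerminal_and_comagma_of_rightDuals {C : Type u} [Category.{v} C]
    [MonoidalCategory C]
    (O : C) (hO : IsInitial O)
    (J : C) (j₁ j₂ : 𝟙_ C ⟶ J) (hJ : IsColimit (BinaryCofan.mk j₁ j₂))
    (hpO : ∀ A : C, IsInitial (A ⊗ O))
    (hpJ : ∀ A : C, IsColimit (BinaryCofan.mk (A ◁ j₁) (A ◁ j₂)))
    (hdO : ∃ (Y : C) (η : 𝟙_ C ⟶ Y ⊗ O), IsRightDual O Y η)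
    (hdJ : ∃ (D : C) (η : 𝟙_ C ⟶ D ⊗ J), IsRightDual J D η) :
    Nonempty (IsTerminal O) ∧
      ∃ (δ : 𝟙_ C ⟶ J) (ε : 𝟙_ C ⟶ O),
        δ ≫ hJ.desc (BinaryCofan.mk (ε ≫ hO.to (𝟙_ C)) (𝟙 (𝟙_ C))) = 𝟙 (𝟙_ C) ∧
        δ ≫ hJ.desc (BinaryCofan.mk (𝟙 (𝟙_ C)) (ε ≫ hO.to (𝟙_ C))) = 𝟙 (𝟙_ C) := by
  obtain ⟨Y, ηO, hY⟩ := hdO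
  obtain ⟨D, η, hD⟩ := hdJ
  have hT : IsTerminal O := hY.isTerminal hpO
  obtain ⟨g₁, hg₁⟩ := hD.exists_unit_comp_whiskerRight_comp_leftUnitor j₁
  obtain ⟨g₂, hg₂⟩ := hD.exists_unit_comp_whiskerRight_comp_leftUnitor j₂
  obtain ⟨m, hm₁, hm₂⟩ : ∃ m : D ⊗ J ⟶ J,
      D ◁ j₁ ≫ m = (ρ_ D).hom ≫ g₁ ≫ j₁ ∧ D ◁ j₂ ≫ m = (ρ_ D).hom ≫ g₂ ≫ j₂ :=
    ⟨(hpJ D).desc (BinaryCofan.mk _ _), (hpJ D).fac _ ⟨.left⟩, (hpJ D).fac _ ⟨.right⟩⟩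
  let ε := hT.from (𝟙_ C)
  have hε : g₁ ≫ ε = g₂ ≫ ε := hT.hom_ext _ _
  refine ⟨⟨hT⟩, η ≫ m, ε, ?_, ?_⟩
  · set p : J ⟶ 𝟙_ C := hJ.desc (BinaryCofan.mk (ε ≫ hO.to (𝟙_ C)) (𝟙 (𝟙_ C)))
    have hp₁ : j₁ ≫ p = ε ≫ hO.to (𝟙_ C) := hJ.fac _ ⟨.left⟩
    have hp₂ : j₂ ≫ p = 𝟙 _ := hJ.fac _ ⟨.right⟩
    change (η ≫ m) ≫ p = 𝟙 _
    rw [Category.assoc, comp_eq_whiskerRight_comp_leftUnitor_comp (hpJ D) hm₁ hm₂ g₂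
      (by rw [hp₁, reassoc_of% hε]) rfl, reassoc_of% hg₂, hp₂]
  · set p : J ⟶ 𝟙_ C := hJ.desc (BinaryCofan.mk (𝟙 (𝟙_ C)) (ε ≫ hO.to (𝟙_ C)))
    have hp₁ : j₁ ≫ p = 𝟙 _ := hJ.fac _ ⟨.left⟩
    have hp₂ : j₂ ≫ p = ε ≫ hO.to (𝟙_ C) := hJ.fac _ ⟨.right⟩
    change (η ≫ m) ≫ p = 𝟙 _
    rw [Category.assoc, comp_eq_whiskerRight_comp_leftUnitor_comp (hpJ D) hm₁ hm₂ g₁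
      rfl (by rw [hp₂, reassoc_of% hε]), reassoc_of% hg₁, hp₁]
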